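/- arXiv:2411.03404 — 2 statements merged into one kernel-verified Lean document; each statement's English description precedes it below -/
import Mathlib

section
/- Let A be an n×s real matrix, B an s×t real matrix, C a t×m real matrix, R_a an n×s, R_b an s×t, R_c a t×m real matrix, and r_a, r_b, r_c n×m real matrices with r_a + r_b + r_c = R_a·R_b·R_c. Define Â = A + R_a, B̂ = B + R_b, Ĉ = C + R_c, M_a = A·B̂·Ĉ, M_b = Â·R_b·Ĉ, M_c = Â·B̂·R_c, S_a = R_a·R_b·Ĉ, S_b = R_a·B̂·R_c, S_c = Â·R_b·R_c. Then for all n×m real matrices V_a and V_b, setting VF_a = M_a + S_a − V_a, T_a = VF_a − r_a, VF_b = −M_b − V_b, T_b = T_a + VF_b − r_b, and V_c = T_b − M_c + S_b + S_c − r_c, one has V_a + V_b + V_c = A·B·C. -/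
/-! Writing `A = Â - R_a`, `B = B̂ - R_b`, `C = Ĉ - R_c`, the product `A·B·C` expands into the eight
inclusion–exclusion terms in the hatted and masking matrices. The shares telescope to
`M_a - M_b - M_c + S_a + S_b + S_c - (r_a + r_b + r_c)`, and with `r_a + r_b + r_c = R_a·R_b·R_c`
these are exactly those eight terms. -/

namespace Matrix

variable {k l m n α : Type*} [Fintype l] [Fintype m] [NonUnitalRing α]

theorem sub_mul_sub_mul_sub (X X' : Matrix k l α) (Y Y' : Matrix l m α) (Z Z' : Matrix m n α) :
    (X - X') * (Y - Y') * (Z - Z') =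
      X * Y * Z - X' * Y * Z - X * Y' * Z - X * Y * Z'
        + X' * Y' * Z + X' * Y * Z' + X * Y' * Z' - X' * Y' * Z' := by
  simp only [Matrix.sub_mul, Matrix.mul_sub]
  abel

end Matrix

/-- Correctness of the online computing phase of S3PM:
the three additive shares `Va`, `Vb`, `Vc` sum to `A * B * C`. -/
theorem s3pm_online_correct (n s t m : ℕ)
    (A Ra : Matrix (Fin n) (Fin s) ℝ) (B Rb : Matrix (Fin s) (Fin t) ℝ)
    (C Rc : Matrix (Fin t) (Fin m) ℝ)
    (ra rb rc : Matrix (Fin n) (Fin m) ℝ) (hr : ra + rb + rc = Ra * Rb * Rc)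
    (Ahat : Matrix (Fin n) (Fin s) ℝ) (hA : Ahat = A + Ra)
    (Bhat : Matrix (Fin s) (Fin t) ℝ) (hB : Bhat = B + Rb)
    (Chat : Matrix (Fin t) (Fin m) ℝ) (hC : Chat = C + Rc)
    (Ma Mb Mc Sa Sb Sc : Matrix (Fin n) (Fin m) ℝ)
    (hMa : Ma = A * Bhat * Chat) (hMb : Mb = Ahat * Rb * Chat)
    (hMc : Mc = Ahat * Bhat * Rc) (hSa : Sa = Ra * Rb * Chat)
    (hSb : Sb = Ra * Bhat * Rc) (hSc : Sc = Ahat * Rb * Rc) :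
    ∀ Va Vb : Matrix (Fin n) (Fin m) ℝ,
      ∀ VFa Ta VFb Tb Vc : Matrix (Fin n) (Fin m) ℝ,
        VFa = Ma + Sa - Va → Ta = VFa - ra → VFb = -Mb - Vb →
          Tb = Ta + VFb - rb → Vc = Tb - Mc + Sb + Sc - rc →
            Va + Vb + Vc = A * B * C := by
  intro Va Vb VFa Ta VFb Tb Vc hVFa hTa hVFb hTb hVc
  have hshares : Va + Vb + Vc = Ma - Mb - Mc + Sa + Sb + Sc - (ra + rb + rc) := by
    subst hVc hTb hVFb hTa hVFa
    abel
  obtain rfl : A = Ahat - Ra := eq_sub_of_add_eq hA.symm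
  obtain rfl : B = Bhat - Rb := eq_sub_of_add_eq hB.symm
  obtain rfl : C = Chat - Rc := eq_sub_of_add_eq hC.symm
  rw [hshares, hr, hMa, hMb, hMc, hSa, hSb, hSc, Matrix.sub_mul_sub_mul_sub,
    Matrix.sub_mul, Matrix.sub_mul]
end

section
/- Let X₁ and X₂ be n₁×m real matrices and Y an n₁×1 real matrix, and set X = X₁ + X₂. Assume Xᵀ·X is invertible. Suppose the m×m real matrices ∂₁, ∂₂, u₁, u₂ and the m×1 real matrices β₁, β₂, β₃ satisfy ∂₁ + ∂₂ = (X₁ᵀ + X₂ᵀ)·(X₁ + X₂), u₁ + u₂ = (∂₁ + ∂₂)⁻¹, and β₁ + β₂ + β₃ = (u₁ + u₂)·(X₁ᵀ + X₂ᵀ)·Y. Then β₁ + β₂ + β₃ = (Xᵀ·X)⁻¹·Xᵀ·Y, i.e. the three shares sum to the least-squares estimator of the linear regression of Y on X. -/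
open Matrix

theorem s3plrt_correct_general (n1 m : ℕ)
    (X1 X2 : Matrix (Fin n1) (Fin m) ℝ) (Y : Matrix (Fin n1) (Fin 1) ℝ)
    (X : Matrix (Fin n1) (Fin m) ℝ) (hX : X = X1 + X2)
    (d1 d2 u1 u2 : Matrix (Fin m) (Fin m) ℝ)
    (beta1 beta2 beta3 : Matrix (Fin m) (Fin 1) ℝ)
    (hd : d1 + d2 = (X1ᵀ + X2ᵀ) * (X1 + X2))
    (hu : u1 + u2 = (d1 + d2)⁻¹)
    (hbeta : beta1 + beta2 + beta3 = (u1 + u2) * (X1ᵀ + X2ᵀ) * Y) :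
    beta1 + beta2 + beta3 = (Xᵀ * X)⁻¹ * Xᵀ * Y := by
  rw [hbeta, hu, hd, hX, transpose_add]

/-- Correctness of the S3PLRT protocol: the three parameter shares sum to the
least-squares estimator `(Xᵀ * X)⁻¹ * Xᵀ * Y` where `X = X₁ + X₂`. -/
theorem s3plrt_correct (n1 m : ℕ)
    (X1 X2 : Matrix (Fin n1) (Fin m) ℝ) (Y : Matrix (Fin n1) (Fin 1) ℝ)
    (X : Matrix (Fin n1) (Fin m) ℝ) (hX : X = X1 + X2)
    (hinv : IsUnit (Xᵀ * X))
    (d1 d2 u1 u2 : Matrix (Fin m) (Fin m) ℝ)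
    (beta1 beta2 beta3 : Matrix (Fin m) (Fin 1) ℝ)
    (hd : d1 + d2 = (X1ᵀ + X2ᵀ) * (X1 + X2))
    (hu : u1 + u2 = (d1 + d2)⁻¹)
    (hbeta : beta1 + beta2 + beta3 = (u1 + u2) * (X1ᵀ + X2ᵀ) * Y) :
    beta1 + beta2 + beta3 = (Xᵀ * X)⁻¹ * Xᵀ * Y :=
  s3plrt_correct_general n1 m X1 X2 Y X hX d1 d2 u1 u2 beta1 beta2 beta3 hd hu hbeta
end
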